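/- arXiv:1912.11465 — 2 statements merged into one kernel-verified Lean document; each statement's English description precedes it below -/
import Mathlib

section
/- Let $Q$ be an involutory quandle, $a,b,c \in Q$ with $c \rhd a = c \rhd b$, and let $t \geq 0$. Set $X = (ba)^t c$ and $Y = (ba)^{t+1} c$ viewed as words, and let $a^X, b^Y$ denote the corresponding quandle elements (the result of applying the word to $a$ resp. $b$). Then for all $z \in Q$: $z^{b^Y\, a\, a^X} = z^{a^X\, a\, b^Y}$, where each superscript letter acts by $\rhd$. -/
/-- An involutory quandle: `x ▷ x = x`, `(x ▷ y) ▷ y = x`, and right self-distributivity. -/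
structure InvQuandle (Q : Type*) where
  act : Q → Q → Q
  idem : ∀ x, act x x = x
  invol : ∀ x y, act (act x y) y = x
  distrib : ∀ x y z, act (act x y) z = act (act x z) (act y z)

namespace InvQuandle

variable {Q : Type*}

/-- Apply a word (list of quandle elements) to `z` on the right:
`apw R z [y₁,…,y_k] = ((z ▷ y₁) ▷ y₂) ⋯ ▷ y_k`. -/
def apw (R : InvQuandle Q) (z : Q) (w : List Q) : Q := w.foldl R.act z

/-- The word `w` repeated `n` times. -/
def wpow (w : List Q) : ℕ → List Q
  | 0 => []
  | n + 1 => w ++ wpow w n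

end InvQuandle

open InvQuandle

/-!
Let `S x` be the involution `z ↦ z ▷ x` of `Q`. Self-distributivity says that every `S y`, hence
every product of them, is a quandle automorphism, and `S (g z) = g * S z * g⁻¹` for automorphisms
`g`. Writing `s = S a`, `r = S b`, `σ = S c` and `k = s * r`, the hypothesis `c ▷ a = c ▷ b` gives
`s σ s = r σ r`, i.e. `σ` commutes with `k`. Both `s` and `p = σ s σ` invert `k` by conjugation, and
the two outer letters of the words act by `S (a^X) = k ^ (2t) * p` and `S (b^Y) = k ^ (2t+1) * p`.
Then `k^m p s k^n p = k^(m+n) p s p` is symmetric in `m` and `n`.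
-/

section Group

variable {G : Type*} [Group G] {k p s : G}

lemma pow_mul_mul_inv_pow_of_semiconjBy_inv (hp : SemiconjBy p k k⁻¹) (m n : ℕ) :
    k ^ m * p * k⁻¹ ^ n = k ^ (m + n) * p := by
  have hpn : p * k⁻¹ ^ n = k ^ n * p := by
    simpa only [inv_inv] using (hp.inv_right.pow_right n).eq
  rw [mul_assoc, hpn, ← mul_assoc, pow_add]

lemma pow_mul_mul_pow_mul_comm_of_semiconjBy_inv (hp : SemiconjBy p k k⁻¹)
    (hs : SemiconjBy s k k⁻¹) (m n : ℕ) :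
    k ^ m * p * s * (k ^ n * p) = k ^ n * p * s * (k ^ m * p) := by
  have hps : ∀ j : ℕ, p * s * k ^ j = k ^ j * (p * s) := fun j =>
    ((SemiconjBy.mul_left (by simpa only [inv_inv] using hp.inv_right) hs).pow_right j).eq
  have hexpand : ∀ i j : ℕ, k ^ i * p * s * (k ^ j * p) = k ^ (i + j) * (p * s * p) := fun i j =>
    calc k ^ i * p * s * (k ^ j * p) = k ^ i * (p * s * k ^ j) * p := by simp only [mul_assoc]
      _ = k ^ (i + j) * (p * s * p) := by rw [hps, pow_add]; simp only [mul_assoc]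
  rw [hexpand, hexpand, add_comm]

theorem conj_mul_comm_of_involutions {s r σ : G} (hs : s * s = 1) (hr : r * r = 1)
    (h : s * σ * s = r * σ * r) (t : ℕ) :
    σ * ((s * r) ^ t * s * (s * r)⁻¹ ^ t) * σ * s *
        (σ * ((s * r) ^ (t + 1) * r * (s * r)⁻¹ ^ (t + 1)) * σ) =
      σ * ((s * r) ^ (t + 1) * r * (s * r)⁻¹ ^ (t + 1)) * σ * s *
        (σ * ((s * r) ^ t * s * (s * r)⁻¹ ^ t) * σ) := by
  have hs' : s⁻¹ = s := inv_eq_of_mul_eq_one_right hs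
  have hr' : r⁻¹ = r := inv_eq_of_mul_eq_one_right hr
  set k := s * r with hk
  have hkinv : k⁻¹ = r * s := by rw [mul_inv_rev, hs', hr']
  have hσk : Commute σ k := by
    calc σ * (s * r) = s * (s * σ * s) * r := by simp only [← mul_assoc, hs, one_mul]
      _ = s * r * σ := by rw [h]; simp only [mul_assoc, hr, mul_one]
  have hσkinv : Commute σ k⁻¹ := hσk.inv_right
  have hsk : SemiconjBy s k k⁻¹ := by
    rw [SemiconjBy, hkinv, mul_assoc, hs, mul_one, hk, ← mul_assoc, hs, one_mul]
  have hσrσ : σ * r * σ = k⁻¹ * (σ * s * σ) := by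
    calc σ * r * σ = r * (r * σ * r) * σ := by simp only [← mul_assoc, hr, one_mul]
      _ = k⁻¹ * (σ * s * σ) := by rw [← h, hkinv]; simp only [mul_assoc]
  have hpk : SemiconjBy (σ * s * σ) k k⁻¹ := by
    calc σ * s * σ * k = σ * (s * σ * s) * r := by rw [hk]; simp only [mul_assoc]
      _ = σ * r * σ := by rw [h]; simp only [mul_assoc, hr, mul_one]
      _ = k⁻¹ * (σ * s * σ) := hσrσ
  have hconj : ∀ (i j : ℕ) (x : G),
      σ * (k ^ i * x * k⁻¹ ^ j) * σ = k ^ i * (σ * x * σ) * k⁻¹ ^ j :=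
    fun i j x => calc
      σ * (k ^ i * x * k⁻¹ ^ j) * σ = σ * k ^ i * x * (k⁻¹ ^ j * σ) := by simp only [mul_assoc]
      _ = k ^ i * (σ * x * σ) * k⁻¹ ^ j := by
        rw [(hσk.pow_right i).eq, ← (hσkinv.pow_right j).eq]; simp only [mul_assoc]
  have hA : σ * (k ^ t * s * k⁻¹ ^ t) * σ = k ^ (t + t) * (σ * s * σ) := by
    rw [hconj, pow_mul_mul_inv_pow_of_semiconjBy_inv hpk]
  have hB : σ * (k ^ (t + 1) * r * k⁻¹ ^ (t + 1)) * σ = k ^ (t + (t + 1)) * (σ * s * σ) := by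
    rw [hconj, hσrσ, pow_succ, mul_assoc (k ^ t), ← mul_assoc k, mul_inv_cancel, one_mul,
      pow_mul_mul_inv_pow_of_semiconjBy_inv hpk]
  rw [hA, hB, pow_mul_mul_pow_mul_comm_of_semiconjBy_inv hpk hsk]

end Group

namespace InvQuandle

variable {Q : Type*} (R : InvQuandle Q)

def S (x : Q) : Equiv.Perm Q :=
  ⟨fun z => R.act z x, fun z => R.act z x, fun z => R.invol z x, fun z => R.invol z x⟩

@[simp] lemma S_apply (x z : Q) : R.S x z = R.act z x := rfl

lemma S_mul_self (x : Q) : R.S x * R.S x = 1 := by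
  ext z; exact R.invol z x

def aut : Submonoid (Equiv.Perm Q) where
  carrier := {g | ∀ x y, g (R.act x y) = R.act (g x) (g y)}
  mul_mem' {g h} hg hh x y := by simp only [Equiv.Perm.mul_apply]; rw [hh x y, hg]
  one_mem' _ _ := rfl

lemma S_mem_aut (y : Q) : R.S y ∈ R.aut := fun x x' => R.distrib x x' y

lemma S_apply_of_mem_aut {g : Equiv.Perm Q} (hg : g ∈ R.aut) (z : Q) :
    R.S (g z) = g * R.S z * g⁻¹ := by
  ext w
  simp only [S_apply, Equiv.Perm.mul_apply, hg _ z, Equiv.Perm.coe_inv, Equiv.apply_symm_apply]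

lemma S_act (x y : Q) : R.S (R.act x y) = R.S y * R.S x * R.S y := by
  rw [← S_apply, S_apply_of_mem_aut R (R.S_mem_aut y), inv_eq_of_mul_eq_one_right (R.S_mul_self y)]

lemma apw_append (z : Q) (w₁ w₂ : List Q) :
    R.apw z (w₁ ++ w₂) = R.apw (R.apw z w₁) w₂ :=
  List.foldl_append

lemma apw_wpow (w : List Q) (n : ℕ) (z : Q) :
    R.apw z (wpow w n) = (fun x => R.apw x w)^[n] z := by
  induction n generalizing z with
  | zero => rfl
  | succ n ih => exact (R.apw_append z w (wpow w n)).trans (ih _)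

lemma S_apw_wpow_pair_append (a b c x : Q) (n : ℕ) :
    R.S (R.apw x (wpow [b, a] n ++ [c])) =
      R.S c * ((R.S a * R.S b) ^ n * R.S x * (R.S a * R.S b)⁻¹ ^ n) * R.S c := by
  have hk : (fun y => R.apw y [b, a]) = ⇑(R.S a * R.S b) := rfl
  have hmem : (R.S a * R.S b) ^ n ∈ R.aut :=
    pow_mem (mul_mem (R.S_mem_aut a) (R.S_mem_aut b)) n
  rw [apw_append, apw_wpow, hk, ← Equiv.Perm.coe_pow]
  rw [show R.apw (((R.S a * R.S b) ^ n) x) [c] = R.act (((R.S a * R.S b) ^ n) x) c from rfl,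
    S_act, S_apply_of_mem_aut R hmem, inv_pow]

end InvQuandle

/-- With $X = (ba)^t c$, $Y = (ba)^{t+1} c$, if $c ▷ a = c ▷ b$ then
$z^{b^Y a a^X} = z^{a^X a b^Y}$ for all $z$. -/
theorem stmt9 {Q : Type*} (R : InvQuandle Q) (a b c : Q)
    (h : R.act c a = R.act c b) (t : ℕ) (z : Q) :
    R.apw z [R.apw b (wpow [b, a] (t + 1) ++ [c]), a, R.apw a (wpow [b, a] t ++ [c])] =
    R.apw z [R.apw a (wpow [b, a] t ++ [c]), a, R.apw b (wpow [b, a] (t + 1) ++ [c])] := by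
  have key : R.S a * R.S c * R.S a = R.S b * R.S c * R.S b := by
    simpa only [R.S_act] using congrArg R.S h
  change (R.S _ * R.S a * R.S _) z = (R.S _ * R.S a * R.S _) z
  rw [R.S_apw_wpow_pair_append, R.S_apw_wpow_pair_append,
    conj_mul_comm_of_involutions (R.S_mul_self a) (R.S_mul_self b) key]
end

section
/- Let $Q$ be an involutory quandle, $a,b \in Q$, and $m \geq 0$, $q \geq 1$ with $q$ odd. If $a^{(ca)^q} = b^{(ab)^m}$ for some $c \in Q$, then $a^{(ab)^m} = b^{(ac)^q}$; similarly if $a^{(ac)^q} = b^{(ab)^m}$ then $a^{(ab)^m} = b^{(ca)^q}$. -/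
open InvQuandle

/-!
Write `A, B, C` for the permutations `z ↦ z ▷ a`, `z ↦ z ▷ b`, `z ↦ z ▷ c` of `Q`; they are
involutions, and right distributivity turns `c ▷ a = c ▷ b` into `A C A = B C B`. Hence
conjugation by `A C` inverts `t = B A`, and so does conjugation by its inverse `C A` and by any odd
power `g` of either. From `g • a = t ^ m • b` we then get
`t ^ m • a = t ^ m g⁻¹ t ^ m • b = g⁻¹ • b`.
-/

namespace SemiconjBy

variable {G : Type*} [Group G]

lemma pow_left_of_odd {g t : G} (h : SemiconjBy g t t⁻¹) {q : ℕ} (hq : Odd q) :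
    SemiconjBy (g ^ q) t t⁻¹ := by
  obtain ⟨k, rfl⟩ := hq
  have h' : SemiconjBy g t⁻¹ t := by simpa only [inv_inv] using h.inv_right
  have hsq : Commute (g ^ 2) t := by
    rw [pow_two]
    exact h'.mul_left h
  rw [pow_succ, pow_mul]
  exact SemiconjBy.mul_left (hsq.pow_left k).inv_right h

end SemiconjBy

section Inversion

variable {G X : Type*} [Group G] [MulAction G X]

lemma semiconjBy_mul_inv_of_mul_mul_eq {a b c : G} (ha : a * a = 1) (hb : b * b = 1)
    (h : a * c * a = b * c * b) : SemiconjBy (a * c) (b * a) (b * a)⁻¹ := by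
  have hcb : c * b = b * (a * c * a) := by
    rw [h, ← mul_assoc, ← mul_assoc, hb, one_mul]
  rw [SemiconjBy, mul_inv_rev, inv_eq_of_mul_eq_one_left ha, inv_eq_of_mul_eq_one_left hb]
  calc a * c * (b * a) = a * b * a * c * (a * a) := by rw [mul_assoc a c, ← mul_assoc c, hcb]; group
    _ = a * b * (a * c) := by rw [ha]; group

lemma smul_eq_inv_smul_of_semiconjBy {g s : G} (h : SemiconjBy g s s⁻¹) {x y : X}
    (hxy : g • x = s • y) : s • x = g⁻¹ • y := by
  have hs : s * g⁻¹ * s = g⁻¹ := by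
    rw [← h.inv_symm_left.eq, mul_assoc, inv_mul_cancel, mul_one]
  rw [← inv_smul_eq_iff.mpr hxy.symm, smul_smul, smul_smul, hs]

lemma pow_smul_eq_inv_pow_smul_of_odd {g t : G} (h : SemiconjBy g t t⁻¹) {q : ℕ} (hq : Odd q)
    (m : ℕ) {x y : X} (hxy : g ^ q • x = t ^ m • y) : t ^ m • x = g⁻¹ ^ q • y := by
  rw [inv_pow]
  refine smul_eq_inv_smul_of_semiconjBy ?_ hxy
  simpa only [inv_pow] using (h.pow_left_of_odd hq).pow_right m

end Inversion

namespace InvQuandle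

variable {Q : Type*} (R : InvQuandle Q)

def sym (x : Q) : Equiv.Perm Q where
  toFun z := R.act z x
  invFun z := R.act z x
  left_inv z := R.invol z x
  right_inv z := R.invol z x

lemma sym_mul_self (x : Q) : R.sym x * R.sym x = 1 :=
  Equiv.ext fun z => R.invol z x

lemma sym_act (x y : Q) : R.sym (R.act y x) = R.sym x * R.sym y * R.sym x :=
  Equiv.ext fun z => by
    change R.act z (R.act y x) = R.act (R.act (R.act z x) y) x
    rw [R.distrib, R.invol]

lemma sym_inv (x : Q) : (R.sym x)⁻¹ = R.sym x :=
  inv_eq_of_mul_eq_one_left (R.sym_mul_self x)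

lemma apw_wpow_pair (x y z : Q) (n : ℕ) :
    R.apw z (wpow [x, y] n) = (R.sym y * R.sym x) ^ n • z := by
  induction n generalizing z with
  | zero => rfl
  | succ n ih =>
    rw [pow_succ, mul_smul, ← ih]
    rfl

end InvQuandle

theorem stmt17_general {Q : Type*} (R : InvQuandle Q) (a b c : Q) (q m : ℕ)
    (hodd : Odd q) (h : R.act c a = R.act c b) :
    (R.apw a (wpow [c, a] q) = R.apw b (wpow [a, b] m) →
      R.apw a (wpow [a, b] m) = R.apw b (wpow [a, c] q)) ∧
    (R.apw a (wpow [a, c] q) = R.apw b (wpow [a, b] m) →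
      R.apw a (wpow [a, b] m) = R.apw b (wpow [c, a] q)) := by
  simp only [R.apw_wpow_pair]
  have hinv : SemiconjBy (R.sym a * R.sym c) (R.sym b * R.sym a) (R.sym b * R.sym a)⁻¹ :=
    semiconjBy_mul_inv_of_mul_mul_eq (R.sym_mul_self a) (R.sym_mul_self b)
      (by rw [← R.sym_act, ← R.sym_act, h])
  have hinv' : SemiconjBy (R.sym c * R.sym a) (R.sym b * R.sym a) (R.sym b * R.sym a)⁻¹ := by
    simpa only [mul_inv_rev, sym_inv] using hinv.inv_inv_symm
  refine ⟨fun hyp => ?_, fun hyp => ?_⟩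
  · simpa only [mul_inv_rev, sym_inv] using pow_smul_eq_inv_pow_smul_of_odd hinv hodd m hyp
  · simpa only [mul_inv_rev, sym_inv] using pow_smul_eq_inv_pow_smul_of_odd hinv' hodd m hyp

/-- for $q$ odd, if $c ▷ a = c ▷ b$ and $a^{(ca)^q} = b^{(ab)^m}$ then
$a^{(ab)^m} = b^{(ac)^q}$; similarly if $a^{(ac)^q} = b^{(ab)^m}$ then
$a^{(ab)^m} = b^{(ca)^q}$. -/
theorem stmt17 {Q : Type*} (R : InvQuandle Q) (a b c : Q) (q m : ℕ) (hq : 1 ≤ q)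
    (hodd : Odd q) (h : R.act c a = R.act c b) :
    (R.apw a (wpow [c, a] q) = R.apw b (wpow [a, b] m) →
      R.apw a (wpow [a, b] m) = R.apw b (wpow [a, c] q)) ∧
    (R.apw a (wpow [a, c] q) = R.apw b (wpow [a, b] m) →
      R.apw a (wpow [a, b] m) = R.apw b (wpow [c, a] q)) :=
  stmt17_general R a b c q m hodd h
end
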